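/- Consider the algorithm A_{L,c} on n machines with true execution times t ∈ ℝ_{≥0}^n. At any pure Nash equilibrium t̂, the expected makespan M(t̂) = Σ_i a_i(t̂)·max(t̂_i, t_i) is at most (1 + (n−1)/L) times the optimal makespan min_i t_i. In other words, the pure Price of Anarchy of A_{L,c} for scheduling one task on n machines is at most 1 + (n−1)/L. -/
import Mathlib


open Finset

/-- The minimum declaration among the `n` machines. -/
noncomputable def xmin {n : ℕ} (x : Fin n → ℝ) : ℝ := ⨅ i, x i

open scoped Classical in
/-- The set of machines making the minimum declaration. -/
noncomputable def Nmin {n : ℕ} (x : Fin n → ℝ) : Finset (Fin n) :=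
  Finset.univ.filter fun i => x i = xmin x

/-- The second smallest declaration: the minimum declaration among machines outside
`Nmin x` (equal to `xmin x` if all machines make the minimum declaration). -/
noncomputable def xsec {n : ℕ} (x : Fin n → ℝ) : ℝ :=
  if h : (Finset.univ \ Nmin x).Nonempty then (Finset.univ \ Nmin x).inf' h x
  else xmin x

open scoped Classical in
/-- The set of machines declaring the second smallest declaration. -/
noncomputable def Nsec {n : ℕ} (x : Fin n → ℝ) : Finset (Fin n) :=
  Finset.univ.filter fun i => x i = xsec x

/-- The probability with which the algorithm `A_{L,c}` assigns the single task to
machine `i`, given the declared execution times `x`. -/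
noncomputable def alloc {n : ℕ} (L c : ℝ) (x : Fin n → ℝ) (i : Fin n) : ℝ :=
  if xmin x = xsec x then 1 / n
  else if xsec x < c * xmin x then
    (if i ∈ Nmin x then (1 / L) / (Nmin x).card
     else if i ∈ Nsec x then (1 - 1 / L) / (Nsec x).card
     else 0)
  else
    (if i ∈ Nmin x then
      (1 - ∑ k ∈ Finset.univ \ Nmin x, xmin x / (L * x k)) / (Nmin x).card
     else xmin x / (L * x i))

/-- The expected cost of machine `i` (with true times `t`) at declarations `x`,
when machines are bound by their declarations. -/
noncomputable def cost {n : ℕ} (L c : ℝ) (t x : Fin n → ℝ) (i : Fin n) : ℝ :=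
  alloc L c x i * max (x i) (t i)

/-- `b` is a pure Nash equilibrium of `A_{L,c}` for true times `t`: no machine can
strictly decrease her expected cost by unilaterally changing her declaration to any
other nonnegative value. -/
def IsEquilibrium {n : ℕ} (L c : ℝ) (t b : Fin n → ℝ) : Prop :=
  ∀ i : Fin n, ∀ x : ℝ, 0 ≤ x →
    cost L c t b i ≤ cost L c t (Function.update b i x) i


section Aux

variable {n : ℕ}

lemma xmin_le (x : Fin n → ℝ) (i : Fin n) : xmin x ≤ x i :=
  ciInf_le (Set.Finite.bddBelow (Set.finite_range x)) i

lemma le_xmin [Nonempty (Fin n)] {x : Fin n → ℝ} {a : ℝ} (h : ∀ i, a ≤ x i) : a ≤ xmin x :=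
  le_ciInf h

lemma exists_xmin [Nonempty (Fin n)] (x : Fin n → ℝ) : ∃ i, x i = xmin x :=
  exists_eq_ciInf_of_finite

lemma mem_Nmin {x : Fin n → ℝ} {i : Fin n} : i ∈ Nmin x ↔ x i = xmin x := by
  classical
  simp [Nmin]

lemma mem_Nsec {x : Fin n → ℝ} {i : Fin n} : i ∈ Nsec x ↔ x i = xsec x := by
  classical
  simp [Nsec]

lemma xmin_nonneg [Nonempty (Fin n)] {x : Fin n → ℝ} (hx : ∀ i, 0 ≤ x i) : 0 ≤ xmin x :=
  le_xmin hx

lemma xsec_le {x : Fin n → ℝ} {k : Fin n} (hk : k ∉ Nmin x) : xsec x ≤ x k := by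
  have hne : (Finset.univ \ Nmin x).Nonempty := ⟨k, by simp [hk]⟩
  rw [xsec, dif_pos hne]
  exact Finset.inf'_le x (by simp [hk])

lemma xmin_lt_xsec {x : Fin n → ℝ} (hne : (Finset.univ \ Nmin x).Nonempty) :
    xmin x < xsec x := by
  rw [xsec, dif_pos hne, Finset.lt_inf'_iff]
  intro k hk
  rcases (xmin_le x k).lt_or_eq with h | h
  · exact h
  · exact absurd (mem_Nmin.2 h.symm) (by simpa using (Finset.mem_sdiff.1 hk).2)

lemma exists_xsec {x : Fin n → ℝ} (hne : (Finset.univ \ Nmin x).Nonempty) :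
    ∃ k, k ∉ Nmin x ∧ x k = xsec x := by
  rw [xsec, dif_pos hne]
  obtain ⟨k, hk, hk2⟩ := Finset.exists_mem_eq_inf' hne x
  exact ⟨k, by simpa using (Finset.mem_sdiff.1 hk).2, hk2.symm⟩

lemma compl_nonempty_of_ne {x : Fin n → ℝ} (h : xmin x ≠ xsec x) :
    (Finset.univ \ Nmin x).Nonempty := by
  by_contra hne
  rw [Finset.not_nonempty_iff_eq_empty] at hne
  have h2 : ¬ (Finset.univ \ Nmin x).Nonempty := by
    rw [hne]; exact Finset.not_nonempty_empty
  have h3 : xsec x = xmin x := by rw [xsec, dif_neg h2]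
  exact h h3.symm

lemma all_eq_of_xmin_eq_xsec {x : Fin n → ℝ} (h : xmin x = xsec x) (k : Fin n) :
    x k = xmin x := by
  by_contra hk
  have hne : (Finset.univ \ Nmin x).Nonempty := ⟨k, by simp [mem_Nmin, hk]⟩
  exact absurd h (xmin_lt_xsec hne).ne

lemma update_xmin_of_lt [Nonempty (Fin n)] {b : Fin n → ℝ} {j : Fin n} {x : ℝ}
    (hx : ∀ k, k ≠ j → x < b k) : xmin (Function.update b j x) = x := by
  apply le_antisymm
  · simpa using xmin_le (Function.update b j x) j
  · apply le_xmin
    intro k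
    rcases eq_or_ne k j with rfl | h
    · simp
    · rw [Function.update_of_ne h]; exact (hx k h).le

lemma update_Nmin_of_lt [Nonempty (Fin n)] {b : Fin n → ℝ} {j : Fin n} {x : ℝ}
    (hx : ∀ k, k ≠ j → x < b k) : Nmin (Function.update b j x) = {j} := by
  ext k
  simp only [mem_Nmin, update_xmin_of_lt hx, Finset.mem_singleton]
  constructor
  · intro h
    by_contra hk
    rw [Function.update_of_ne hk] at h
    exact absurd h (hx k hk).ne'
  · rintro rfl; simp

lemma alloc_update_case2 [Nonempty (Fin n)] {L c : ℝ} {b : Fin n → ℝ} {j : Fin n} {x : ℝ}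
    (hx : ∀ k, k ≠ j → x < b k) (hcx : ∃ k, k ≠ j ∧ b k < c * x) :
    alloc L c (Function.update b j x) j = 1 / L := by
  set u := Function.update b j x with hu
  have hmin : xmin u = x := update_xmin_of_lt hx
  have hNmin : Nmin u = {j} := update_Nmin_of_lt hx
  obtain ⟨k, hkj, hk⟩ := hcx
  have hk' : k ∉ Nmin u := by rw [hNmin]; simp [hkj]
  have hsec_lt : xsec u < c * x := by
    calc xsec u ≤ u k := xsec_le hk'
    _ = b k := Function.update_of_ne hkj x b
    _ < c * x := hk
  have hne : (Finset.univ \ Nmin u).Nonempty := ⟨k, by simp [hk']⟩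
  have h1 : xmin u ≠ xsec u := (xmin_lt_xsec hne).ne
  rw [alloc, if_neg h1, if_pos (by rw [hmin]; exact hsec_lt),
    if_pos (by rw [hNmin]; exact Finset.mem_singleton_self j), hNmin]
  simp

lemma alloc_update_case3 [Nonempty (Fin n)] {L c : ℝ} {b : Fin n → ℝ} {j : Fin n} {x : ℝ}
    (hne2 : ∃ k, k ≠ j)
    (hx : ∀ k, k ≠ j → x < b k) (hcx : ∀ k, k ≠ j → c * x ≤ b k) :
    alloc L c (Function.update b j x) j
      = 1 - ∑ k ∈ Finset.univ \ {j}, x / (L * b k) := by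
  set u := Function.update b j x with hu
  have hukj : ∀ k, k ≠ j → u k = b k := fun k hk => Function.update_of_ne hk x b
  have hmin : xmin u = x := update_xmin_of_lt hx
  have hNmin : Nmin u = {j} := update_Nmin_of_lt hx
  obtain ⟨k0, hk0⟩ := hne2
  have hne : (Finset.univ \ Nmin u).Nonempty := ⟨k0, by simp [hNmin, hk0]⟩
  have h1 : xmin u ≠ xsec u := (xmin_lt_xsec hne).ne
  have h2 : ¬ xsec u < c * xmin u := by
    rw [not_lt, hmin]
    obtain ⟨k, hk, hk2⟩ := exists_xsec hne
    have hkj : k ≠ j := by rw [hNmin] at hk; simpa using hk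
    rw [← hk2, hukj k hkj]
    exact hcx k hkj
  rw [alloc, if_neg h1, if_neg h2,
    if_pos (by rw [hNmin]; exact Finset.mem_singleton_self j), hNmin, hmin]
  rw [Finset.card_singleton]
  have hsum : ∑ k ∈ Finset.univ \ ({j} : Finset (Fin n)), x / (L * u k)
      = ∑ k ∈ Finset.univ \ {j}, x / (L * b k) := by
    apply Finset.sum_congr rfl
    intro k hk
    have hkj : k ≠ j := by simpa using (Finset.mem_sdiff.1 hk).2
    rw [hukj k hkj]
  rw [hsum]
  simp

lemma cost_update_huge [Nonempty (Fin n)] {L c : ℝ} {t b : Fin n → ℝ} {i j : Fin n} {x : ℝ}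
    (hL : 0 < L) (hbnn : ∀ k, 0 ≤ b k)
    (hij : i ≠ j) (hmin : ∀ k, b i ≤ b k)
    (hx1 : ∀ k, k ≠ j → b k < x) (hx2 : t j ≤ x) (hx3 : c * b i ≤ x) :
    cost L c t (Function.update b j x) j ≤ b i / L := by
  set u := Function.update b j x with hu
  have hbix : b i < x := hx1 i hij
  have hxpos : 0 < x := lt_of_le_of_lt (hbnn i) hbix
  have hui : u i = b i := Function.update_of_ne hij x b
  have huj : u j = x := Function.update_self j x b
  have hukj : ∀ k, k ≠ j → u k = b k := fun k hk => Function.update_of_ne hk x b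
  have hxmin : xmin u = b i := by
    apply le_antisymm
    · rw [← hui]; exact xmin_le u i
    · apply le_xmin
      intro k
      rcases eq_or_ne k j with rfl | h
      · rw [huj]; exact hbix.le
      · rw [hukj k h]; exact hmin k
  have hjN : j ∉ Nmin u := by
    rw [mem_Nmin, hxmin, huj]
    exact hbix.ne'
  have hne : (Finset.univ \ Nmin u).Nonempty := ⟨j, by simp [hjN]⟩
  have hlt : xmin u < xsec u := xmin_lt_xsec hne
  have hmaxx : max (u j) (t j) = x := by rw [huj]; exact max_eq_left hx2
  rw [cost, hmaxx]
  by_cases hcase : xsec u < c * xmin u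
  · have hjsec : j ∉ Nsec u := by
      rw [mem_Nsec, huj]
      intro hxe
      rw [hxmin] at hcase
      exact absurd (hxe ▸ hcase) (not_lt.2 hx3)
    rw [alloc, if_neg hlt.ne, if_pos hcase, if_neg hjN, if_neg hjsec]
    rw [zero_mul]
    exact div_nonneg (hbnn i) hL.le
  · rw [alloc, if_neg hlt.ne, if_neg hcase, if_neg hjN, hxmin, huj]
    have : b i / (L * x) * x = b i / L := by
      field_simp
    rw [this]

lemma alloc_case3_nonmin {L c : ℝ} {b : Fin n → ℝ} {k : Fin n}
    (h1 : xmin b ≠ xsec b) (h2 : ¬ xsec b < c * xmin b) (hk : k ∉ Nmin b) :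
    alloc L c b k = xmin b / (L * b k) := by
  rw [alloc, if_neg h1, if_neg h2, if_neg hk]

lemma alloc_case3_min {L c : ℝ} {b : Fin n → ℝ} {i0 : Fin n}
    (h1 : xmin b ≠ xsec b) (h2 : ¬ xsec b < c * xmin b) (hN : Nmin b = {i0}) :
    alloc L c b i0 = 1 - ∑ k ∈ Finset.univ \ {i0}, xmin b / (L * b k) := by
  rw [alloc, if_neg h1, if_neg h2,
    if_pos (by rw [hN]; exact Finset.mem_singleton_self _), hN]
  simp

end Aux

set_option maxHeartbeats 4000000 in
/-- At any pure Nash equilibrium `b` of `A_{L,c}` on `n ≥ 2` machines, the expected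
makespan `∑ i, alloc L c b i * max (b i) (t i)` is at most `1 + (n-1)/L` times the
optimal makespan `min_i (t i)`: the pure Price of Anarchy of `A_{L,c}` for
scheduling one task on `n` machines is at most `1 + (n-1)/L`. -/
theorem poa_n_machines
    {n : ℕ} (hn : 2 ≤ n) (L c : ℝ)
    (hL : 2 * ((n : ℝ) - 1) < L) (hc : 1 < c)
    (t b : Fin n → ℝ)
    (ht : ∀ i, 0 ≤ t i) (hb : ∀ i, 0 ≤ b i)
    (heq : IsEquilibrium L c t b) :
    ∑ i : Fin n, alloc L c b i * max (b i) (t i) ≤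
      (1 + ((n : ℝ) - 1) / L) * (⨅ k, t k) := by
  haveI hNE : Nonempty (Fin n) := Fin.pos_iff_nonempty.1 (by omega)
  haveI hNT : Nontrivial (Fin n) := Fin.nontrivial_iff_two_le.mpr hn
  have hn2 : (2:ℝ) ≤ (n:ℝ) := by exact_mod_cast hn
  have hL2 : (2:ℝ) < L := by nlinarith
  have hL0 : (0:ℝ) < L := by linarith
  have hL1 : (1:ℝ) < L := by linarith
  have hc0 : (0:ℝ) < c := by linarith
  have hm0 : 0 ≤ xmin b := xmin_nonneg hb
  have hTnn : 0 ≤ ⨅ k, t k := le_ciInf ht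
  -- key deviation bound: deviate to a huge declaration
  have key : ∀ j i : Fin n, i ≠ j → (∀ k, b i ≤ b k) →
      alloc L c b j * max (b j) (t j) ≤ b i / L := by
    intro j i hij hmini
    have hsup : ∀ k, b k ≤ Finset.univ.sup' Finset.univ_nonempty b := fun k =>
      Finset.le_sup' b (Finset.mem_univ k)
    set x := Finset.univ.sup' Finset.univ_nonempty b + t j + c * b i + 1 with hxdef
    have hsup0 : 0 ≤ Finset.univ.sup' Finset.univ_nonempty b := le_trans (hb i) (hsup i)
    have hcb : 0 ≤ c * b i := mul_nonneg hc0.le (hb i)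
    have htj : 0 ≤ t j := ht j
    have hx1 : ∀ k, k ≠ j → b k < x := by
      intro k _
      have := hsup k
      rw [hxdef]; linarith
    have hx2 : t j ≤ x := by rw [hxdef]; linarith
    have hx3 : c * b i ≤ x := by rw [hxdef]; linarith
    have hx0 : 0 ≤ x := le_trans htj hx2
    calc alloc L c b j * max (b j) (t j) = cost L c t b j := rfl
    _ ≤ cost L c t (Function.update b j x) j := heq j x hx0
    _ ≤ b i / L := cost_update_huge hL0 hb hij hmini hx1 hx2 hx3
  by_cases hall : xmin b = xsec b
  · -- Case I: all declarations equal
    have hbeq : ∀ k, b k = xmin b := fun k => all_eq_of_xmin_eq_xsec hall k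
    have hkey : ∀ i : Fin n, 1 / (n:ℝ) * max (b i) (t i) ≤ xmin b / L := by
      intro i
      obtain ⟨i', hi'⟩ := exists_ne i
      have h1 := key i i' hi' (fun k => by rw [hbeq i']; exact xmin_le b k)
      rw [alloc, if_pos hall] at h1
      rw [hbeq i'] at h1
      exact h1
    have hnln : (n:ℝ) < L := by nlinarith
    have hn0 : (0:ℝ) < n := by linarith
    have hmzero : xmin b = 0 := by
      obtain ⟨i⟩ := hNE
      have h1 := hkey i
      have hmle : xmin b ≤ max (b i) (t i) := le_trans (le_of_eq (hbeq i).symm) (le_max_left _ _)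
      have h2 : xmin b / (n:ℝ) ≤ xmin b / L := by
        calc xmin b / (n:ℝ) = 1 / (n:ℝ) * xmin b := by ring
        _ ≤ 1 / (n:ℝ) * max (b i) (t i) :=
            mul_le_mul_of_nonneg_left hmle (by positivity)
        _ ≤ xmin b / L := h1
      rw [div_le_div_iff₀ hn0 hL0] at h2
      nlinarith
    have htzero : ∀ i, t i = 0 := by
      intro i
      have h1 := hkey i
      rw [hmzero] at h1
      have h2 : t i ≤ max (b i) (t i) := le_max_right _ _
      have h3 : 0 ≤ max (b i) (t i) := le_trans (ht i) h2
      have h4 : 1 / (n:ℝ) * max (b i) (t i) ≤ 0 := by simpa using h1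
      have h5 : 0 < 1 / (n:ℝ) := by positivity
      nlinarith [ht i]
    have hT0 : (⨅ k, t k) = 0 := by
      apply le_antisymm _ hTnn
      obtain ⟨i⟩ := hNE
      calc (⨅ k, t k) ≤ t i := ciInf_le (Set.Finite.bddBelow (Set.finite_range t)) i
      _ = 0 := htzero i
    have hzero : ∀ i : Fin n, alloc L c b i * max (b i) (t i) = 0 := by
      intro i
      rw [hbeq i, hmzero, htzero i]
      simp
    rw [hT0, Finset.sum_congr rfl (fun i _ => hzero i)]
    simp
  · -- Case II: xmin b < xsec b
    have hne : (Finset.univ \ Nmin b).Nonempty := compl_nonempty_of_ne hall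
    have hms : xmin b < xsec b := xmin_lt_xsec hne
    have hs0 : 0 < xsec b := lt_of_le_of_lt hm0 hms
    obtain ⟨im, him⟩ := exists_xmin b
    have hmini : ∀ k, b im ≤ b k := fun k => him ▸ xmin_le b k
    by_cases hA : xsec b < c * xmin b
    · -- Case II.A: second value close to minimum: impossible at equilibrium
      exfalso
      obtain ⟨j, hjn, hjs⟩ := exists_xsec hne
      have hallocj : alloc L c b j = (1 - 1/L) / ((Nsec b).card : ℝ) := by
        rw [alloc, if_neg hall, if_pos hA, if_neg hjn, if_pos (mem_Nsec.2 hjs)]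
      have himj : im ≠ j := by
        intro h
        rw [h, hjs] at him
        exact hms.ne him.symm
      have hcostj := key j im himj hmini
      rw [him] at hcostj
      have hcard1 : 1 ≤ (Nsec b).card := Finset.card_pos.2 ⟨j, mem_Nsec.2 hjs⟩
      have hsub : Nsec b ⊆ Finset.univ.erase im := by
        intro k hk
        rw [Finset.mem_erase]
        refine ⟨?_, Finset.mem_univ k⟩
        intro hke
        rw [hke, mem_Nsec, him] at hk
        exact hms.ne hk
      have hcard2 : (Nsec b).card ≤ n - 1 := by
        calc (Nsec b).card ≤ (Finset.univ.erase im).card := Finset.card_le_card hsub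
        _ = n - 1 := by
            rw [Finset.card_erase_of_mem (Finset.mem_univ _), Finset.card_univ, Fintype.card_fin]
      have hnu1 : (1:ℝ) ≤ ((Nsec b).card : ℝ) := by exact_mod_cast hcard1
      have hnun : ((Nsec b).card : ℝ) ≤ (n:ℝ) - 1 := by
        have h := (Nat.cast_le (α := ℝ)).2 hcard2
        rwa [Nat.cast_sub (by omega), Nat.cast_one] at h
      have hnu0 : (0:ℝ) < ((Nsec b).card : ℝ) := by linarith
      have hmaxs : xsec b ≤ max (b j) (t j) := le_trans (le_of_eq hjs.symm) (le_max_left _ _)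
      have hpos : 0 ≤ (1 - 1/L) / ((Nsec b).card : ℝ) := by
        apply div_nonneg _ hnu0.le
        have : 1/L < 1 := by rw [div_lt_one hL0]; linarith
        linarith
      have h1 : (1 - 1/L) / ((Nsec b).card : ℝ) * xsec b ≤ xmin b / L := by
        calc (1 - 1/L) / ((Nsec b).card : ℝ) * xsec b
            ≤ (1 - 1/L) / ((Nsec b).card : ℝ) * max (b j) (t j) :=
              mul_le_mul_of_nonneg_left hmaxs hpos
        _ = alloc L c b j * max (b j) (t j) := by rw [hallocj]
        _ ≤ xmin b / L := hcostj
      rw [div_mul_eq_mul_div, div_le_div_iff₀ hnu0 hL0] at h1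
      -- h1 : (1 - 1/L) * xsec b * L ≤ xmin b * (Nsec b).card
      have h2 : (1 - 1/L) * xsec b * L = xsec b * (L - 1) := by
        field_simp
      rw [h2] at h1
      nlinarith [mul_le_mul_of_nonneg_left hnun hm0, hms, hs0, hm0]
    · -- Case II.B: the regular case
      have hBsc : c * xmin b ≤ xsec b := not_lt.1 hA
      have hbk_ge : ∀ k, k ∉ Nmin b → xsec b ≤ b k := fun k hk => xsec_le hk
      have hbk_pos : ∀ k, k ∉ Nmin b → 0 < b k := fun k hk =>
        lt_of_lt_of_le hs0 (hbk_ge k hk)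
      have hcard_pos : 0 < (Nmin b).card := Finset.card_pos.2 ⟨im, mem_Nmin.2 him⟩
      by_cases hone : (Nmin b).card = 1
      · -- unique minimum machine i0
        obtain ⟨i0, hNi0⟩ := Finset.card_eq_one.1 hone
        have hbi0 : b i0 = xmin b := mem_Nmin.1 (hNi0 ▸ Finset.mem_singleton_self i0)
        have hnm : ∀ k, k ≠ i0 → k ∉ Nmin b := by
          intro k hk
          rw [hNi0]
          simpa using hk
        have hsdiff : Finset.univ \ Nmin b = Finset.univ \ {i0} := by rw [hNi0]
        have hmini0 : ∀ k, b i0 ≤ b k := fun k => hbi0 ▸ xmin_le b k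
        have hbks : ∀ k, k ≠ i0 → xsec b ≤ b k := fun k hk => hbk_ge k (hnm k hk)
        have hbkp : ∀ k, k ≠ i0 → 0 < b k := fun k hk => hbk_pos k (hnm k hk)
        have hbkcm : ∀ k, k ≠ i0 → c * xmin b ≤ b k := fun k hk =>
          le_trans hBsc (hbks k hk)
        have hcompl_ne : (Finset.univ \ ({i0} : Finset (Fin n))).Nonempty := by
          obtain ⟨k, hk⟩ := exists_ne i0
          exact ⟨k, by simp [hk]⟩
        have hcompl_card : ((Finset.univ \ ({i0} : Finset (Fin n))).card : ℝ) = (n:ℝ) - 1 := by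
          rw [Finset.card_sdiff_of_subset (Finset.subset_univ _), Finset.card_univ, Fintype.card_fin,
            Finset.card_singleton, Nat.cast_sub (by omega), Nat.cast_one]
        have hSnn : 0 ≤ ∑ k ∈ Finset.univ \ {i0}, xmin b / (L * b k) := by
          apply Finset.sum_nonneg
          intro k hk
          have hki0 : k ≠ i0 := by simpa using (Finset.mem_sdiff.1 hk).2
          exact div_nonneg hm0 (mul_nonneg hL0.le (hbkp k hki0).le)
        have hSle : ∑ k ∈ Finset.univ \ {i0}, xmin b / (L * b k) ≤ ((n:ℝ) - 1) / (L * c) := by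
          have hterm : ∀ k ∈ Finset.univ \ ({i0} : Finset (Fin n)),
              xmin b / (L * b k) ≤ 1 / (L * c) := by
            intro k hk
            have hki0 : k ≠ i0 := by simpa using (Finset.mem_sdiff.1 hk).2
            rw [div_le_div_iff₀ (mul_pos hL0 (hbkp k hki0)) (mul_pos hL0 hc0)]
            have := hbkcm k hki0
            nlinarith
          calc ∑ k ∈ Finset.univ \ {i0}, xmin b / (L * b k)
              ≤ (Finset.univ \ ({i0} : Finset (Fin n))).card • (1 / (L * c)) :=
                Finset.sum_le_card_nsmul _ _ _ hterm
          _ = ((n:ℝ) - 1) / (L * c) := by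
              rw [nsmul_eq_mul, hcompl_card]
              ring
        have hcost0 : alloc L c b i0 = 1 - ∑ k ∈ Finset.univ \ {i0}, xmin b / (L * b k) :=
          alloc_case3_min (L := L) hall hA hNi0
        have hLS : L * (∑ k ∈ Finset.univ \ {i0}, xmin b / (L * b k)) ≤ ((n:ℝ) - 1) / c := by
          have h := mul_le_mul_of_nonneg_left hSle hL0.le
          have h2 : L * (((n:ℝ) - 1) / (L * c)) = ((n:ℝ) - 1) / c := by
            field_simp
          rw [h2] at h
          exact h
        have hS2 : 2 * (∑ k ∈ Finset.univ \ {i0}, xmin b / (L * b k)) < 1 := by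
          have h3 : ((n:ℝ) - 1) / c ≤ (n:ℝ) - 1 := div_le_self (by linarith) hc.le
          nlinarith
        -- Claim 1 : t i0 ≤ xmin b
        have hclaim1 : t i0 ≤ xmin b := by
          by_contra hcon
          push_neg at hcon
          have hti0 : 0 < t i0 := lt_of_le_of_lt hm0 hcon
          by_cases hci : c * t i0 ≤ xsec b
          · -- deviate to t i0, staying far below the second value
            have hx1 : ∀ k, k ≠ i0 → t i0 < b k := by
              intro k hk
              have : t i0 < c * t i0 := by nlinarith
              linarith [hbks k hk, hci]
            have hcx : ∀ k, k ≠ i0 → c * t i0 ≤ b k := fun k hk =>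
              le_trans hci (hbks k hk)
            have halloc := alloc_update_case3 (L := L) (exists_ne i0) hx1 hcx
            have hdev := heq i0 (t i0) (ht i0)
            rw [cost, cost, halloc, Function.update_self, hcost0, hbi0,
              max_eq_right hcon.le, max_self] at hdev
            -- hdev : (1 - S) * t i0 ≤ (1 - S') * t i0 with S < S'
            have hSlt : ∑ k ∈ Finset.univ \ {i0}, xmin b / (L * b k)
                < ∑ k ∈ Finset.univ \ {i0}, t i0 / (L * b k) := by
              apply Finset.sum_lt_sum_of_nonempty hcompl_ne
              intro k hk
              have hki0 : k ≠ i0 := by simpa using (Finset.mem_sdiff.1 hk).2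
              exact (div_lt_div_iff_of_pos_right (mul_pos hL0 (hbkp k hki0))).2 hcon
            nlinarith
          · push_neg at hci
            -- deviate into the middle range, getting allocation 1/L
            set x := min (t i0) ((xsec b / c + xsec b) / 2) with hxdef
            have hscs : xsec b / c < xsec b := div_lt_self hs0 hc
            have hxgt : xsec b / c < x := by
              apply lt_min
              · rw [div_lt_iff₀ hc0]; nlinarith
              · linarith
            have hxlt : x < xsec b := lt_of_le_of_lt (min_le_right _ _) (by linarith)
            have hxle : x ≤ t i0 := min_le_left _ _
            have hx0 : 0 ≤ x := le_min (ht i0) (by positivity)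
            have hx1 : ∀ k, k ≠ i0 → x < b k := fun k hk =>
              lt_of_lt_of_le hxlt (hbks k hk)
            obtain ⟨jw, hjw, hjws⟩ := exists_xsec hne
            have hjwi0 : jw ≠ i0 := by
              intro h
              rw [hNi0] at hjw
              exact hjw (h ▸ Finset.mem_singleton_self i0)
            have hcx : ∃ k, k ≠ i0 ∧ b k < c * x := by
              refine ⟨jw, hjwi0, ?_⟩
              rw [hjws]
              rw [div_lt_iff₀ hc0] at hxgt
              linarith [hxgt]
            have halloc := alloc_update_case2 (L := L) hx1 hcx
            have hdev := heq i0 x hx0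
            rw [cost, cost, halloc, Function.update_self, hcost0, hbi0,
              max_eq_right hcon.le, max_eq_right hxle] at hdev
            -- hdev : (1 - S) * t i0 ≤ 1/L * t i0
            have h4 : (1 - ∑ k ∈ Finset.univ \ {i0}, xmin b / (L * b k)) * L ≤ 1 := by
              have h5 : (1 - ∑ k ∈ Finset.univ \ {i0}, xmin b / (L * b k)) ≤ 1/L := by
                have := mul_le_mul_of_nonneg_right hdev (le_of_lt (inv_pos.2 hti0))
                rw [mul_inv_cancel_right₀ (ne_of_gt hti0)] at this
                rw [mul_inv_cancel_right₀ (ne_of_gt hti0)] at this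
                exact this
              rw [← le_div_iff₀ hL0] at *
              exact h5
            nlinarith
        -- Claim 2 : xmin b ≤ t i0
        have hclaim2 : xmin b ≤ t i0 := by
          by_contra hcon
          push_neg at hcon
          have hmpos : 0 < xmin b := lt_of_le_of_lt (ht i0) hcon
          have hx1 : ∀ k, k ≠ i0 → t i0 < b k := fun k hk =>
            lt_of_lt_of_le (lt_trans hcon hms) (hbks k hk)
          have hcx : ∀ k, k ≠ i0 → c * t i0 ≤ b k := by
            intro k hk
            have : c * t i0 ≤ c * xmin b := by nlinarith
            linarith [hbkcm k hk]
          have halloc := alloc_update_case3 (L := L) (exists_ne i0) hx1 hcx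
          have hdev := heq i0 (t i0) (ht i0)
          rw [cost, cost, halloc, Function.update_self, hcost0, hbi0,
            max_eq_left hcon.le, max_self] at hdev
          -- hdev : (1-S) * xmin b ≤ (1-S') * t i0  with S' * xmin b = S * t i0
          have hrel : (∑ k ∈ Finset.univ \ {i0}, t i0 / (L * b k)) * xmin b
              = (∑ k ∈ Finset.univ \ {i0}, xmin b / (L * b k)) * t i0 := by
            rw [Finset.sum_mul, Finset.sum_mul]
            apply Finset.sum_congr rfl
            intro k hk
            ring
          have hS'nn : 0 ≤ ∑ k ∈ Finset.univ \ {i0}, t i0 / (L * b k) := by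
            apply Finset.sum_nonneg
            intro k hk
            have hki0 : k ≠ i0 := by simpa using (Finset.mem_sdiff.1 hk).2
            exact div_nonneg (ht i0) (mul_nonneg hL0.le (hbkp k hki0).le)
          have e1 := mul_le_mul_of_nonneg_right hdev hm0
          have e2 : (1 - ∑ k ∈ Finset.univ \ {i0}, t i0 / (L * b k)) * t i0 * xmin b
              = t i0 * xmin b - (∑ k ∈ Finset.univ \ {i0}, xmin b / (L * b k)) * (t i0 * t i0) := by
            linear_combination (-(t i0)) * hrel
          rw [e2] at e1
          have h4 : (∑ k ∈ Finset.univ \ {i0}, xmin b / (L * b k)) * (xmin b + t i0) < xmin b := by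
            nlinarith
          nlinarith [mul_pos (sub_pos.2 hcon) (sub_pos.2 h4)]
        -- Claim 3 : xmin b ≤ t k for every other machine
        have hclaim3 : ∀ k, k ≠ i0 → xmin b ≤ t k := by
          intro k hki0
          by_contra hcon
          push_neg at hcon
          have hmpos : 0 < xmin b := lt_of_le_of_lt (ht k) hcon
          set x := (max (t k) (xmin b / c) + xmin b) / 2 with hxdef
          have hmaxlt : max (t k) (xmin b / c) < xmin b :=
            max_lt hcon (div_lt_self hmpos hc)
          have hxltm : x < xmin b := by rw [hxdef]; linarith [le_max_left (t k) (xmin b / c)]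
          have hxgtt : t k ≤ x := by
            have := le_max_left (t k) (xmin b / c)
            rw [hxdef]; linarith
          have hxgtc : xmin b / c < x := by
            have := le_max_right (t k) (xmin b / c)
            rw [hxdef]; linarith
          have hx0 : 0 ≤ x := le_trans (ht k) hxgtt
          have hx1 : ∀ k', k' ≠ k → x < b k' := fun k' _ =>
            lt_of_lt_of_le hxltm (xmin_le b k')
          have hcx : ∃ k', k' ≠ k ∧ b k' < c * x := by
            refine ⟨i0, Ne.symm hki0, ?_⟩
            rw [hbi0]
            rw [div_lt_iff₀ hc0] at hxgtc
            linarith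
          have halloc := alloc_update_case2 (L := L) hx1 hcx
          have hdev := heq k x hx0
          rw [cost, cost, halloc, Function.update_self] at hdev
          rw [alloc_case3_nonmin hall hA (hnm k hki0)] at hdev
          rw [max_eq_left hxgtt] at hdev
          -- hdev : xmin b/(L * b k) * max (b k) (t k) ≤ 1/L * x
          have hlow : xmin b / L ≤ xmin b / (L * b k) * max (b k) (t k) := by
            have h6 : xmin b / (L * b k) * b k = xmin b / L := by
              have hbk0 : b k ≠ 0 := ne_of_gt (hbkp k hki0)
              have hL0' : L ≠ 0 := ne_of_gt hL0
              field_simp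
            rw [← h6]
            apply mul_le_mul_of_nonneg_left (le_max_left _ _)
            exact div_nonneg hm0 (mul_nonneg hL0.le (hbkp k hki0).le)
          have h7 : xmin b / L ≤ 1 / L * x := le_trans hlow hdev
          rw [div_le_iff₀ hL0] at h7
          have h8 : 1 / L * x * L = x := by field_simp
          rw [h8] at h7
          linarith
        -- conclude : the infimum of t equals xmin b
        have hti0m : t i0 = xmin b := le_antisymm hclaim1 hclaim2
        have hT : (⨅ k, t k) = xmin b := by
          apply le_antisymm
          · calc (⨅ k, t k) ≤ t i0 := ciInf_le (Set.Finite.bddBelow (Set.finite_range t)) i0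
            _ = xmin b := hti0m
          · apply le_ciInf
            intro k
            rcases eq_or_ne k i0 with rfl | hk
            · exact hti0m.ge
            · exact hclaim3 k hk
        rw [hT]
        rw [Finset.sum_eq_add_sum_sdiff_singleton_of_mem (Finset.mem_univ i0)
          (fun i => alloc L c b i * max (b i) (t i))]
        have hterm0 : alloc L c b i0 * max (b i0) (t i0) ≤ xmin b := by
          rw [hcost0, hbi0, hti0m, max_self]
          nlinarith
        have hterms : ∀ k ∈ Finset.univ \ ({i0} : Finset (Fin n)),
            alloc L c b k * max (b k) (t k) ≤ xmin b / L := by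
          intro k hk
          have hki0 : k ≠ i0 := by simpa using (Finset.mem_sdiff.1 hk).2
          have h := key k i0 (Ne.symm hki0) hmini0
          rwa [hbi0] at h
        calc alloc L c b i0 * max (b i0) (t i0)
              + ∑ k ∈ Finset.univ \ {i0}, alloc L c b k * max (b k) (t k)
            ≤ xmin b + ∑ k ∈ Finset.univ \ {i0}, xmin b / L :=
              add_le_add hterm0 (Finset.sum_le_sum hterms)
        _ = xmin b + ((n:ℝ) - 1) * (xmin b / L) := by
            rw [Finset.sum_const, nsmul_eq_mul, hcompl_card]
        _ = (1 + ((n:ℝ) - 1) / L) * xmin b := by ring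
      · -- at least two minimum machines : xmin b must be 0 and all such t vanish
        have h2card : 1 < (Nmin b).card := by omega
        obtain ⟨i1, hi1, i2, hi2, h12⟩ := Finset.one_lt_card.1 h2card
        have hkeyN : ∀ i ∈ Nmin b, alloc L c b i * max (b i) (t i) ≤ xmin b / L := by
          intro i hi
          rcases eq_or_ne i i1 with rfl | hii
          · have h := key i i2 (fun h => h12 h.symm) (fun k => (mem_Nmin.1 hi2) ▸ xmin_le b k)
            rwa [mem_Nmin.1 hi2] at h
          · have h := key i i1 (Ne.symm hii) (fun k => (mem_Nmin.1 hi1) ▸ xmin_le b k)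
            rwa [mem_Nmin.1 hi1] at h
        have hSnn : 0 ≤ ∑ k ∈ Finset.univ \ Nmin b, xmin b / (L * b k) := by
          apply Finset.sum_nonneg
          intro k hk
          exact div_nonneg hm0 (mul_nonneg hL0.le (hbk_pos k (Finset.mem_sdiff.1 hk).2).le)
        have hallocN : ∀ i ∈ Nmin b, alloc L c b i
            = (1 - ∑ k ∈ Finset.univ \ Nmin b, xmin b / (L * b k)) / ((Nmin b).card : ℝ) := by
          intro i hi
          rw [alloc, if_neg hall, if_neg hA, if_pos hi]
        -- show xmin b = 0
        have hmzero : xmin b = 0 := by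
          by_contra hmne
          have hmpos : 0 < xmin b := lt_of_le_of_ne hm0 (Ne.symm hmne)
          set q := ((Finset.univ \ Nmin b).card : ℝ) with hq
          have hq1 : (1:ℝ) ≤ q := by
            rw [hq]
            exact_mod_cast Finset.card_pos.2 hne
          have hqn : q + ((Nmin b).card : ℝ) = (n:ℝ) := by
            have hcn : (Nmin b).card ≤ n := by
              have h := Finset.card_le_univ (Nmin b)
              simpa using h
            have h1 : (Finset.univ \ Nmin b).card = n - (Nmin b).card := by
              rw [Finset.card_sdiff_of_subset (Finset.subset_univ _), Finset.card_univ, Fintype.card_fin]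
            rw [hq, h1, Nat.cast_sub hcn]
            ring
          have hterm : ∀ k ∈ Finset.univ \ Nmin b, xmin b / (L * b k) ≤ 1 / (L * c) := by
            intro k hk
            have hk' := (Finset.mem_sdiff.1 hk).2
            rw [div_le_div_iff₀ (mul_pos hL0 (hbk_pos k hk')) (mul_pos hL0 hc0)]
            have h1 := le_trans hBsc (hbk_ge k hk')
            nlinarith
          have hSq : ∑ k ∈ Finset.univ \ Nmin b, xmin b / (L * b k) ≤ q * (1 / (L * c)) := by
            have h := Finset.sum_le_card_nsmul _ _ _ hterm
            rwa [nsmul_eq_mul] at h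
          have hnu2 : (2:ℝ) ≤ ((Nmin b).card : ℝ) := by exact_mod_cast h2card
          have hSmax : (1 - ∑ k ∈ Finset.univ \ Nmin b, xmin b / (L * b k))
              / ((Nmin b).card : ℝ) * xmin b ≤ xmin b / L := by
            have h := hkeyN i1 hi1
            rw [hallocN i1 hi1] at h
            refine le_trans ?_ h
            apply mul_le_mul_of_nonneg_left
            · exact le_trans (le_of_eq (mem_Nmin.1 hi1).symm) (le_max_left _ _)
            · apply div_nonneg _ (by linarith)
              have hqlc : q * (1 / (L * c)) ≤ 1 := by
                rw [mul_one_div, div_le_one (mul_pos hL0 hc0)]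
                nlinarith
              linarith
          -- derive contradiction
          have hnupos : (0:ℝ) < ((Nmin b).card : ℝ) := by linarith
          rw [div_mul_eq_mul_div, div_le_div_iff₀ hnupos hL0] at hSmax
          -- (1 - S) * xmin b * L ≤ xmin b * card
          have hdiv : (1 - ∑ k ∈ Finset.univ \ Nmin b, xmin b / (L * b k)) * L
              ≤ ((Nmin b).card : ℝ) := by
            have h9 := mul_le_mul_of_nonneg_right hSmax (le_of_lt (inv_pos.2 hmpos))
            have hq0 : xmin b ≠ 0 := ne_of_gt hmpos
            calc (1 - ∑ k ∈ Finset.univ \ Nmin b, xmin b / (L * b k)) * L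
                = (1 - ∑ k ∈ Finset.univ \ Nmin b, xmin b / (L * b k)) * xmin b * L * (xmin b)⁻¹ := by
                  field_simp
            _ ≤ xmin b * ((Nmin b).card : ℝ) * (xmin b)⁻¹ := h9
            _ = ((Nmin b).card : ℝ) := by field_simp
          have hqc : q / c < q := div_lt_self (by linarith) hc
          have hLSq : L * (∑ k ∈ Finset.univ \ Nmin b, xmin b / (L * b k)) ≤ q / c := by
            have h := mul_le_mul_of_nonneg_left hSq hL0.le
            have h2 : L * (q * (1 / (L * c))) = q / c := by field_simp
            linarith [h2 ▸ h]
          nlinarith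
        -- xmin b = 0 : every term of the sum vanishes
        have hzero : ∀ i : Fin n, alloc L c b i * max (b i) (t i) = 0 := by
          intro i
          by_cases hi : i ∈ Nmin b
          · have h := hkeyN i hi
            rw [hmzero] at h
            simp only [zero_div] at h
            apply le_antisymm h
            apply mul_nonneg
            · rw [hallocN i hi, hmzero]
              simp only [zero_div, Finset.sum_const_zero, sub_zero]
              positivity
            · exact le_trans (hb i) (le_max_left _ _)
          · rw [alloc_case3_nonmin hall hA hi, hmzero]
            simp
        rw [Finset.sum_congr rfl (fun i _ => hzero i)]
        have : (0:ℝ) ≤ (1 + ((n:ℝ) - 1) / L) * (⨅ k, t k) := by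
          apply mul_nonneg _ hTnn
          have : 0 ≤ ((n:ℝ) - 1) / L := div_nonneg (by linarith) hL0.le
          linarith
        simpa using this
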